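/- arXiv:1612.07728 — 2 statements merged into one kernel-verified Lean document; each statement's English description precedes it below -/
import Mathlib

section
/- Fix an integer d ≥ 2. For ρ ∈ (0,1], define λ*(ρ) ≥ 0 by (λ*(ρ))² = 2 · inf_{t ∈ (0,1)} [ ((1+t^d)/t^d) · f_ρ(t) ]. Then there exist constants C > 0 and ρ₀ > 0 such that for all ρ ∈ (0, ρ₀), (λ*(ρ))² ≥ 4(−ρ log ρ − Cρ); in other words, λ*(ρ) ≥ 2√(−ρ log ρ − O(ρ)) as ρ → 0. -/
set_option maxHeartbeats 1000000


open Filter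

noncomputable section

/-- Rademacher rate function `f_Rade(t) = log 2 - H((1+t)/2)`. -/
def fRade (t : ℝ) : ℝ := Real.log 2 - Real.binEntropy ((1 + t) / 2)

/-- Entropy rate `G(ζ) = -H({ζ, ρ-ζ, ρ-ζ, 1-2ρ+ζ}) + 2H(ρ)`. -/
def Gfun (ρ ζ : ℝ) : ℝ :=
  -(Real.negMulLog ζ + Real.negMulLog (ρ - ζ) + Real.negMulLog (ρ - ζ)
      + Real.negMulLog (1 - 2*ρ + ζ)) + 2 * Real.binEntropy ρ

/-- Sparse Rademacher rate function
`f_ρ(t) = min_{ζ ∈ [max(ρt, 2ρ-1), ρ]} [G(ζ) + ζ f_Rade(ρt/ζ)]`. -/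
def fSparse (ρ t : ℝ) : ℝ :=
  sInf ((fun ζ => Gfun ρ ζ + ζ * fRade (ρ * t / ζ)) ''
    Set.Icc (max (ρ * t) (2*ρ - 1)) ρ)

/-- The square of the sparse Rademacher lower-bound threshold:
`λ*(ρ)² = 2 inf_{t ∈ (0,1)} ((1+t^d)/t^d) f_ρ(t)`. -/
def lamSparseSq (d : ℕ) (ρ : ℝ) : ℝ :=
  2 * sInf ((fun t => (1 + t^d) / t^d * fSparse ρ t) '' Set.Ioo (0:ℝ) 1)


/-! ### Auxiliary lemmas -/

/-- Pointwise Gibbs inequality: `c - q ≤ c log c - c log q`. -/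
lemma gibbs_pt {c q : ℝ} (hc : 0 ≤ c) (hq : 0 < q) :
    c - q ≤ c * Real.log c - c * Real.log q := by
  rcases eq_or_lt_of_le hc with h | h
  · simp [← h]; positivity
  · have hlog : 1 - (c / q)⁻¹ ≤ Real.log (c / q) := by
      have := Real.log_le_sub_one_of_pos (inv_pos.mpr (div_pos h hq))
      rw [Real.log_inv] at this; linarith
    have hinv : (c / q)⁻¹ = q / c := by field_simp
    rw [Real.log_div (ne_of_gt h) (ne_of_gt hq), hinv] at hlog
    have := mul_le_mul_of_nonneg_left hlog (le_of_lt h)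
    have hqc : c * (q / c) = q := by field_simp
    nlinarith

/-- `√(1-x²) ≤ 1 - x²/2` -/
lemma sqrt_aux {x : ℝ} (hx0 : 0 ≤ x) (hx1 : x ≤ 1) :
    Real.sqrt (1 - x^2) ≤ 1 - x^2/2 := by
  have h1 : (1 : ℝ) - x^2 ≤ (1 - x^2/2)^2 := by nlinarith
  calc Real.sqrt (1 - x^2) ≤ Real.sqrt ((1 - x^2/2)^2) := Real.sqrt_le_sqrt h1
    _ = |1 - x^2/2| := Real.sqrt_sq_eq_abs _
    _ = 1 - x^2/2 := abs_of_nonneg (by nlinarith)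

/-- Quadratic lower bound: `(1+x)log(1+x) + (1-x)log(1-x) ≥ x²/2` for `x ∈ [0,1]`. -/
lemma quad_lb {x : ℝ} (hx0 : 0 ≤ x) (hx1 : x ≤ 1) :
    x^2/2 ≤ (1+x) * Real.log (1+x) + (1-x) * Real.log (1-x) := by
  set s := Real.sqrt (1+x) with hs
  set t := Real.sqrt (1-x) with ht
  have hs2 : s^2 = 1 + x := Real.sq_sqrt (by linarith)
  have ht2 : t^2 = 1 - x := Real.sq_sqrt (by linarith)
  have hs0 : 0 < s := Real.sqrt_pos.mpr (by linarith)
  have ht0 : 0 ≤ t := Real.sqrt_nonneg _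
  have hlogs : Real.log (1+x) = 2 * Real.log s := by
    rw [← hs2]; rw [Real.log_pow]; push_cast; ring
  have hA : 2*(1+x) - 2*s ≤ (1+x) * Real.log (1+x) := by
    have h1 : 1 - s⁻¹ ≤ Real.log s := by
      have := Real.log_le_sub_one_of_pos (inv_pos.mpr hs0)
      rw [Real.log_inv] at this; linarith
    have h2 := mul_le_mul_of_nonneg_left h1 (by linarith : (0:ℝ) ≤ 2*(1+x))
    have h3 : (1+x) * s⁻¹ = s := by
      rw [← hs2]; field_simp
    rw [hlogs]; nlinarith
  have hB : 2*(1-x) - 2*t ≤ (1-x) * Real.log (1-x) := by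
    rcases eq_or_lt_of_le hx1 with h | h
    · subst h; norm_num
    · have ht0' : 0 < t := Real.sqrt_pos.mpr (by linarith)
      have hlogt : Real.log (1-x) = 2 * Real.log t := by
        rw [← ht2]; rw [Real.log_pow]; push_cast; ring
      have h1 : 1 - t⁻¹ ≤ Real.log t := by
        have := Real.log_le_sub_one_of_pos (inv_pos.mpr ht0')
        rw [Real.log_inv] at this; linarith
      have h2 := mul_le_mul_of_nonneg_left h1 (by linarith : (0:ℝ) ≤ 2*(1-x))
      have h3 : (1-x) * t⁻¹ = t := by
        rw [← ht2]; field_simp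
      rw [hlogt]; nlinarith
  have hst : s * t = Real.sqrt (1 - x^2) := by
    rw [hs, ht, ← Real.sqrt_mul (by linarith)]; ring_nf
  have hst2 : s * t ≤ 1 - x^2/2 := hst ▸ sqrt_aux hx0 hx1
  have hsum : s + t ≤ 2 - x^2/4 := by
    have h1 : (s+t)^2 ≤ (2 - x^2/4)^2 := by nlinarith
    nlinarith [Real.sqrt_nonneg (1+x), Real.sqrt_nonneg (1-x)]
  linarith

/-- `fRade x ≥ x²/4` for `x ∈ [0,1]`. -/
lemma fRade_ge {x : ℝ} (hx0 : 0 ≤ x) (hx1 : x ≤ 1) : x^2/4 ≤ fRade x := by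
  have hident : fRade x = ((1+x) * Real.log (1+x) + (1-x) * Real.log (1-x)) / 2 := by
    unfold fRade Real.binEntropy
    have e1 : (1:ℝ) - (1+x)/2 = (1-x)/2 := by ring
    rw [e1]
    rcases eq_or_lt_of_le hx1 with h | h
    · subst h; norm_num
    · have hx1' : (0:ℝ) < 1 - x := by linarith
      have hx0' : (0:ℝ) < 1 + x := by linarith
      rw [Real.log_inv, Real.log_inv,
        Real.log_div (ne_of_gt hx0') (by norm_num),
        Real.log_div (ne_of_gt hx1') (by norm_num)]
      ring
  rw [hident]
  have := quad_lb hx0 hx1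
  linarith

lemma Gfun_eq (ρ ζ : ℝ) : Gfun ρ ζ = ζ * Real.log ζ + 2*((ρ-ζ) * Real.log (ρ-ζ))
    + (1-2*ρ+ζ) * Real.log (1-2*ρ+ζ) - 2*(ρ*Real.log ρ) - 2*((1-ρ)*Real.log (1-ρ)) := by
  simp only [Gfun, Real.negMulLog, Real.binEntropy, Real.log_inv]; ring

/-- subadditivity: `Gfun ρ ζ ≥ 0`. -/
lemma Gfun_nonneg {ρ ζ : ℝ} (hζ0 : 0 ≤ ζ) (hζρ : ζ ≤ ρ) (hρ : ρ < 1/2) (hρ0 : 0 < ρ) :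
    0 ≤ Gfun ρ ζ := by
  have h1ρ : (0:ℝ) < 1 - ρ := by linarith
  have g1 := gibbs_pt hζ0 (show (0:ℝ) < ρ^2 by positivity)
  have g2 := gibbs_pt (show (0:ℝ) ≤ ρ - ζ by linarith) (show (0:ℝ) < ρ*(1-ρ) by positivity)
  have g3 := gibbs_pt (show (0:ℝ) ≤ 1-2*ρ+ζ by linarith) (show (0:ℝ) < (1-ρ)^2 by positivity)
  rw [Real.log_pow] at g1 g3
  rw [Real.log_mul (ne_of_gt hρ0) (ne_of_gt h1ρ)] at g2
  rw [Gfun_eq]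
  push_cast at g1 g3
  nlinarith [g1, g2, g3]

/-- refined bound: `Gfun ρ ζ ≥ ζ log ζ - 2ζ log ρ - ζ + ρ² - 2ρζ`. -/
lemma Gfun_ge {ρ ζ : ℝ} (hζ0 : 0 ≤ ζ) (hζρ : ζ ≤ ρ) (hρ : ρ < 1/2) (hρ0 : 0 < ρ) :
    ζ * Real.log ζ - 2*ζ*Real.log ρ - ζ + ρ^2 - 2*ρ*ζ ≤ Gfun ρ ζ := by
  have h1ρ : (0:ℝ) < 1 - ρ := by linarith
  have g1 := gibbs_pt (show (0:ℝ) ≤ ρ - ζ by linarith) hρ0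
  have g2 := gibbs_pt (show (0:ℝ) ≤ 1-2*ρ+ζ by linarith) (show (0:ℝ) < (1-ρ)^2 by positivity)
  rw [Real.log_pow] at g2
  have g3 : Real.log (1-ρ) ≤ -ρ := by
    have := Real.log_le_sub_one_of_pos h1ρ; linarith
  have g4 : (ζ-ρ) * (-ρ) ≤ (ζ-ρ) * Real.log (1-ρ) :=
    mul_le_mul_of_nonpos_left g3 (by linarith)
  rw [Gfun_eq]
  push_cast at g2
  nlinarith [g1, g2, g4]

lemma fac1 {t u : ℝ} (ht0 : 0 < t) (hu0 : 0 < u) (hu1 : u ≤ 1) :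
    2 ≤ (1+t^2*u)*t/(t^2*u) := by
  rw [le_div_iff₀ (by positivity)]
  nlinarith [mul_nonneg ht0.le (sub_nonneg.mpr hu1),
    mul_nonneg (mul_nonneg hu0.le ht0.le) (sq_nonneg (1-t))]

lemma fac2 {t u : ℝ} (ht0 : 0 < t) (hu0 : 0 < u) (hu1 : u ≤ 1) :
    1 ≤ (1+t^2*u)*t^2/(t^2*u) := by
  rw [le_div_iff₀ (by positivity)]
  nlinarith [mul_nonneg (sq_nonneg t) (sub_nonneg.mpr hu1), sq_nonneg (t*t*u)]

lemma fac3 {t u : ℝ} (ht0 : 0 < t) (ht1 : t ≤ 1/8) (hu0 : 0 < u) (hu1 : u ≤ 1) :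
    8 ≤ (1+t^2*u)*t/(t^2*u) := by
  rw [le_div_iff₀ (by positivity)]
  have h1 : t*u ≤ 1/8 := by nlinarith
  nlinarith [mul_nonneg (mul_nonneg (sq_nonneg t) hu0.le) ht0.le,
    mul_nonneg (mul_nonneg ht0.le hu0.le) (sub_nonneg.mpr (show t*u ≤ 1/8 from h1))]

/-- Key pointwise bound for `t ∈ (0,1)` and `ζ ∈ [ρt, ρ]`. -/
lemma key (d : ℕ) (hd : 2 ≤ d) {ρ t ζ : ℝ} (hρ0 : 0 < ρ) (hρ : ρ < Real.exp (-200))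
    (ht0 : 0 < t) (ht1 : t < 1) (hζ1 : ρ * t ≤ ζ) (hζ2 : ζ ≤ ρ) :
    2*ρ*(-Real.log ρ) - 8*ρ ≤ (1+t^d)/t^d * (Gfun ρ ζ + ζ * fRade (ρ*t/ζ)) := by
  obtain ⟨L, hLdef⟩ : ∃ L : ℝ, L = -Real.log ρ := ⟨_, rfl⟩
  rw [← hLdef]
  have hlogρ : Real.log ρ = -L := by rw [hLdef]; ring
  have hL : 200 < L := by
    have h1 : Real.log ρ < Real.log (Real.exp (-200)) := Real.log_lt_log hρ0 hρ
    rw [Real.log_exp] at h1; rw [hLdef]; linarith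
  have hρsmall : ρ < 1/201 := by
    have h201 : (201:ℝ) ≤ Real.exp 200 := by
      have := Real.add_one_le_exp (200:ℝ); linarith
    have h1 : Real.exp (-200:ℝ) ≤ 1/201 := by
      rw [Real.exp_neg, inv_eq_one_div]
      exact one_div_le_one_div_of_le (by norm_num) h201
    linarith
  have hρhalf : ρ < 1/2 := by linarith
  have hζ0 : 0 < ζ := lt_of_lt_of_le (by positivity) hζ1
  have hx0 : 0 < ρ*t/ζ := by positivity
  have hx1 : ρ*t/ζ ≤ 1 := (div_le_one hζ0).mpr hζ1
  have hRq : (ρ*t)^2/(4*ζ) ≤ ζ * fRade (ρ*t/ζ) := by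
    have h1 := fRade_ge hx0.le hx1
    have h2 := mul_le_mul_of_nonneg_left h1 hζ0.le
    have h3 : ζ * ((ρ*t/ζ)^2/4) = (ρ*t)^2/(4*ζ) := by field_simp
    linarith [h3 ▸ h2]
  have hR0 : 0 ≤ ζ * fRade (ρ*t/ζ) := le_trans (by positivity) hRq
  have hG0 : 0 ≤ Gfun ρ ζ := Gfun_nonneg hζ0.le hζ2 hρhalf hρ0
  obtain ⟨u, hudef⟩ : ∃ u : ℝ, u = t^(d-2) := ⟨_, rfl⟩
  have htd : t^d = t^2 * u := by
    rw [hudef, ← pow_add]; congr 1; omega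
  have hu1 : u ≤ 1 := by rw [hudef]; exact pow_le_one₀ ht0.le ht1.le
  have hu0 : 0 < u := by rw [hudef]; exact pow_pos ht0 _
  have htd0 : 0 < t^d := pow_pos ht0 _
  have hc0 : 0 < (1+t^d)/t^d := by positivity
  rcases le_or_gt (1/8 : ℝ) t with hcase | hcase
  · -- Branch 1 : t ≥ 1/8
    have hlog8 : Real.log 8 < 2.08 := by
      have h2 : (8:ℝ) = 2^3 := by norm_num
      rw [h2, Real.log_pow]
      have := Real.log_two_lt_d9
      push_cast; linarith
    have hlogt : -Real.log 8 ≤ Real.log t := by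
      have : Real.log (1/8) ≤ Real.log t := Real.log_le_log (by norm_num) hcase
      rwa [Real.log_div (by norm_num) (by norm_num), Real.log_one, zero_sub] at this
    have hzz : ζ * (Real.log ρ + Real.log t) ≤ ζ * Real.log ζ := by
      have := mul_le_mul_of_nonneg_left (Real.log_le_log (by positivity) hζ1) hζ0.le
      rwa [Real.log_mul (ne_of_gt hρ0) (ne_of_gt ht0)] at this
    rw [hlogρ] at hzz
    have hGlb := Gfun_ge hζ0.le hζ2 hρhalf hρ0
    rw [hlogρ] at hGlb
    have hstep : ζ * (L-4) ≤ ζ * (Real.log t + L - 1 - 2*ρ) :=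
      mul_le_mul_of_nonneg_left (by linarith) hζ0.le
    have hstep2 : ρ*t*(L-4) ≤ ζ*(L-4) :=
      mul_le_mul_of_nonneg_right (by linarith) (by linarith)
    have hE : ρ*t*(L-4) ≤ Gfun ρ ζ + ζ * fRade (ρ*t/ζ) := by
      nlinarith [sq_nonneg ρ]
    have hmul := mul_le_mul_of_nonneg_left hE hc0.le
    have hfac : 2 ≤ (1+t^d)*t/t^d := by rw [htd]; exact fac1 ht0 hu0 hu1
    have heq : (1+t^d)/t^d * (ρ*t*(L-4)) = ρ*(L-4) * ((1+t^d)*t/t^d) := by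
      field_simp
    have hfin : ρ*(L-4)*2 ≤ ρ*(L-4) * ((1+t^d)*t/t^d) :=
      mul_le_mul_of_nonneg_left hfac (by nlinarith)
    calc 2*ρ*L - 8*ρ = ρ*(L-4)*2 := by ring
      _ ≤ ρ*(L-4) * ((1+t^d)*t/t^d) := hfin
      _ = (1+t^d)/t^d * (ρ*t*(L-4)) := heq.symm
      _ ≤ _ := hmul
  · -- Branch 2 : t < 1/8
    have hL0 : (0:ℝ) < L := by linarith
    rcases le_or_gt ζ (ρ/(8*L)) with hζcase | hζcase
    · -- small ζ : use the Rademacher term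
      have hRlb : 2*ρ*L*t^2 ≤ (ρ*t)^2/(4*ζ) := by
        have h1 : (ρ*t)^2/(4*ζ) ≥ (ρ*t)^2/(4*(ρ/(8*L))) := by
          apply div_le_div_of_nonneg_left (by positivity) (by positivity)
          linarith
        have h2 : (ρ*t)^2/(4*(ρ/(8*L))) = 2*ρ*L*t^2 := by
          field_simp; ring
        linarith
      have hE : 2*ρ*L*t^2 ≤ Gfun ρ ζ + ζ * fRade (ρ*t/ζ) := by linarith
      have hmul := mul_le_mul_of_nonneg_left hE hc0.le
      have heq : (1+t^d)/t^d * (2*ρ*L*t^2) = 2*ρ*L*((1+t^d)*t^2/t^d) := by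
        field_simp
      have hfac : 1 ≤ (1+t^d)*t^2/t^d := by rw [htd]; exact fac2 ht0 hu0 hu1
      have hfin : 2*ρ*L*1 ≤ 2*ρ*L*((1+t^d)*t^2/t^d) :=
        mul_le_mul_of_nonneg_left hfac (by positivity)
      calc 2*ρ*L - 8*ρ ≤ 2*ρ*L*1 := by rw [mul_one]; nlinarith [mul_pos hρ0 hL0]
        _ ≤ 2*ρ*L*((1+t^d)*t^2/t^d) := hfin
        _ = (1+t^d)/t^d * (2*ρ*L*t^2) := heq.symm
        _ ≤ _ := hmul
    · -- large ζ : use the entropy term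
      have hlogζ : Real.log ρ - Real.log (8*L) ≤ Real.log ζ := by
        have h1 : Real.log (ρ/(8*L)) ≤ Real.log ζ :=
          Real.log_le_log (by positivity) hζcase.le
        rwa [Real.log_div (ne_of_gt hρ0) (by positivity)] at h1
      have hexp3 : (20:ℝ) ≤ Real.exp 3 := by
        have h1 : Real.exp 3 = Real.exp 1 * Real.exp 1 * Real.exp 1 := by
          rw [← Real.exp_add, ← Real.exp_add]; norm_num
        have := Real.exp_one_gt_d9
        nlinarith
      have hlogL : Real.log L ≤ L/20 + 2 := by
        have h1 : Real.log (L/Real.exp 3) ≤ L/Real.exp 3 - 1 :=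
          Real.log_le_sub_one_of_pos (by positivity)
        rw [Real.log_div (ne_of_gt hL0) (by positivity), Real.log_exp] at h1
        have h2 : L/Real.exp 3 ≤ L/20 :=
          div_le_div_of_nonneg_left hL0.le (by norm_num) hexp3
        linarith
      have hlog8L : Real.log (8*L) ≤ 5 + L/20 := by
        rw [Real.log_mul (by norm_num) (ne_of_gt hL0)]
        have h2 : (8:ℝ) = 2^3 := by norm_num
        rw [h2, Real.log_pow]
        have := Real.log_two_lt_d9
        push_cast; linarith
      have hGlb := Gfun_ge hζ0.le hζ2 hρhalf hρ0
      rw [hlogρ] at hGlb hlogζ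
      have hcoef : L/2 ≤ Real.log ζ + 2*L - 1 - 2*ρ := by linarith
      have hstep : ζ * (L/2) ≤ ζ * (Real.log ζ + 2*L - 1 - 2*ρ) :=
        mul_le_mul_of_nonneg_left hcoef hζ0.le
      have hstep2 : ρ*t*(L/2) ≤ ζ*(L/2) :=
        mul_le_mul_of_nonneg_right hζ1 (by positivity)
      have hE : ρ*t*(L/2) ≤ Gfun ρ ζ + ζ * fRade (ρ*t/ζ) := by
        nlinarith [sq_nonneg ρ]
      have hmul := mul_le_mul_of_nonneg_left hE hc0.le
      have heq : (1+t^d)/t^d * (ρ*t*(L/2)) = (ρ*L/2)*((1+t^d)*t/t^d) := by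
        field_simp
      have hfac : 8 ≤ (1+t^d)*t/t^d := by rw [htd]; exact fac3 ht0 hcase.le hu0 hu1
      have hfin : (ρ*L/2)*8 ≤ (ρ*L/2)*((1+t^d)*t/t^d) :=
        mul_le_mul_of_nonneg_left hfac (by positivity)
      calc 2*ρ*L - 8*ρ ≤ (ρ*L/2)*8 := by nlinarith [mul_pos hρ0 hL0]
        _ ≤ (ρ*L/2)*((1+t^d)*t/t^d) := hfin
        _ = (1+t^d)/t^d * (ρ*t*(L/2)) := heq.symm
        _ ≤ _ := hmul

/-- Per-`t` bound on the rate function. -/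
lemma key_t (d : ℕ) (hd : 2 ≤ d) {ρ t : ℝ} (hρ0 : 0 < ρ) (hρ : ρ < Real.exp (-200))
    (ht0 : 0 < t) (ht1 : t < 1) :
    2*ρ*(-Real.log ρ) - 8*ρ ≤ (1 + t^d) / t^d * fSparse ρ t := by
  have htd0 : 0 < t^d := pow_pos ht0 _
  have hc0 : 0 < (1+t^d)/t^d := by positivity
  have hρ1 : ρ < 1 := lt_trans hρ (by
    calc Real.exp (-200:ℝ) < Real.exp 0 := Real.exp_lt_exp.mpr (by norm_num)
      _ = 1 := Real.exp_zero)
  have hlb : (2*ρ*(-Real.log ρ) - 8*ρ)/((1+t^d)/t^d) ≤ fSparse ρ t := by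
    apply le_csInf
    · refine Set.Nonempty.image _ ⟨ρ, ?_⟩
      refine Set.mem_Icc.mpr ⟨max_le ?_ (by linarith), le_refl _⟩
      nlinarith
    · rintro y ⟨ζ, hζ, rfl⟩
      obtain ⟨hζlo, hζhi⟩ := Set.mem_Icc.mp hζ
      have hζ1 : ρ * t ≤ ζ := le_trans (le_max_left _ _) hζlo
      rw [div_le_iff₀ hc0]
      calc 2*ρ*(-Real.log ρ) - 8*ρ
          ≤ (1+t^d)/t^d * (Gfun ρ ζ + ζ * fRade (ρ*t/ζ)) :=
            key d hd hρ0 hρ ht0 ht1 hζ1 hζhi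
        _ = (Gfun ρ ζ + ζ * fRade (ρ*t/ζ)) * ((1+t^d)/t^d) := by ring
  calc 2*ρ*(-Real.log ρ) - 8*ρ
      = (2*ρ*(-Real.log ρ) - 8*ρ)/((1+t^d)/t^d) * ((1+t^d)/t^d) := by
        field_simp
    _ ≤ fSparse ρ t * ((1+t^d)/t^d) :=
        mul_le_mul_of_nonneg_right hlb hc0.le
    _ = (1+t^d)/t^d * fSparse ρ t := by ring

/-- **Sparse Rademacher asymptotics as `ρ → 0`.** For fixed `d ≥ 2`, there are constants
`C > 0` and `ρ₀ > 0` such that `λ*(ρ)² ≥ 4(-ρ log ρ - C ρ)` for all `ρ ∈ (0, ρ₀)`;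
that is, `λ*(ρ) ≥ 2√(-ρ log ρ - O(ρ))` as `ρ → 0`. -/
theorem sparse_rademacher_threshold_asymptotics
    (d : ℕ) (hd : 2 ≤ d) :
    ∃ C > (0:ℝ), ∃ ρ₀ > (0:ℝ), ∀ ρ ∈ Set.Ioo (0:ℝ) ρ₀,
      4 * (-(ρ * Real.log ρ) - C * ρ) ≤ lamSparseSq d ρ := by
  refine ⟨4, by norm_num, Real.exp (-200), Real.exp_pos _, ?_⟩
  rintro ρ ⟨hρ0, hρ⟩
  have hlb : 2*ρ*(-Real.log ρ) - 8*ρ ≤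
      sInf ((fun t => (1 + t^d) / t^d * fSparse ρ t) '' Set.Ioo (0:ℝ) 1) := by
    apply le_csInf
    · exact Set.Nonempty.image _ ⟨1/2, by norm_num⟩
    · rintro y ⟨t, ⟨ht0, ht1⟩, rfl⟩
      exact key_t d hd hρ0 hρ ht0 ht1
  unfold lamSparseSq
  nlinarith [hlb]

end
end

section
/- For each integer d ≥ 3, the equation (2/d)(1 + t^d) · t²/(1−t²) + log(1−t²) = 0 has exactly one solution t in the open interval (0,1). -/
/-!
Dividing by `t² / (1 - t²)` turns the equation into `F t = 0` with
`F t = (1 - s) log (1 - s) / s + (2 / d) (1 + t ^ d)`, `s = t²`. The first summand is minus the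
slope of the secant of the strictly convex function `x log x` through `1 - s` and `1`, so it is
strictly increasing in `s`, and `F` is strictly increasing on `(0, 1)`. Since `log (3/4) < -1/4`
and `d ≥ 3`, `F (1/2) < 0`; at `t² = 1 - e^{-d}` the first summand is `-d / (e^d - 1) > -2 / d`,
so `F > 0` there. The intermediate value theorem gives the root, and monotonicity its uniqueness.
-/

open Real Set

theorem IsPreconnected.existsUnique_eq_of_injOn {X α : Type*} [TopologicalSpace X]
    [ConditionallyCompleteLinearOrder α] [TopologicalSpace α] [OrderClosedTopology α]
    {s : Set X} {f : X → α} {a b : X} {c : α} (hs : IsPreconnected s) (hinj : InjOn f s)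
    (hf : ContinuousOn f s) (ha : a ∈ s) (hb : b ∈ s) (hc : c ∈ Icc (f a) (f b)) :
    ∃! x, x ∈ s ∧ f x = c := by
  obtain ⟨x, hx, rfl⟩ := hs.intermediate_value ha hb hf hc
  exact ⟨x, ⟨hx, rfl⟩, fun y ⟨hy, hyx⟩ => hinj hy hx hyx⟩

theorem strictMonoOn_one_sub_mul_log_one_sub_div :
    StrictMonoOn (fun s : ℝ => (1 - s) * log (1 - s) / s) (Ioo 0 1) := by
  intro x ⟨hx0, hx1⟩ y ⟨hy0, hy1⟩ hxy
  have key := strictConvexOn_mul_log.secant_strict_mono (a := 1) (x := 1 - y) (y := 1 - x)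
    (by simp) (by simp; linarith) (by simp; linarith) (by linarith) (by linarith) (by linarith)
  simp only [log_one, mul_zero, sub_zero, sub_sub_cancel_left] at key
  rw [div_neg, div_neg, neg_lt_neg_iff] at key
  exact key

theorem one_sub_mul_log_one_sub_div_one_sub_exp_neg (x : ℝ) :
    (1 - (1 - exp (-x))) * log (1 - (1 - exp (-x))) / (1 - exp (-x)) = -(x / (exp x - 1)) := by
  rw [sub_sub_cancel, log_exp, exp_neg]
  rcases eq_or_ne x 0 with rfl | hx
  · simp
  have : exp x - 1 ≠ 0 := sub_ne_zero.mpr (by simpa using hx)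
  field_simp

theorem div_exp_sub_one_lt_two_div {x : ℝ} (hx : 0 < x) : x / (exp x - 1) < 2 / x := by
  have hexp := quadratic_le_exp_of_nonneg hx.le
  rw [div_lt_div_iff₀ (by nlinarith) hx]
  nlinarith

theorem sqrt_one_sub_exp_neg_mem_Ioo {x : ℝ} (hx : 0 < x) : √(1 - exp (-x)) ∈ Ioo 0 1 := by
  have hexp : exp (-x) < 1 := exp_lt_one_iff.mpr (by linarith)
  exact ⟨sqrt_pos.mpr (by linarith), (sqrt_lt' one_pos).mpr (by linarith [exp_pos (-x)])⟩

noncomputable def sphericalCriticalFun (d : ℕ) (t : ℝ) : ℝ :=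
  (1 - t ^ 2) * log (1 - t ^ 2) / t ^ 2 + 2 / d * (1 + t ^ d)

theorem sphericalCriticalFun_mul_sq_div (d : ℕ) {t : ℝ} (ht0 : t ≠ 0)
    (ht1 : 1 - t ^ 2 ≠ 0) :
    sphericalCriticalFun d t * (t ^ 2 / (1 - t ^ 2)) =
      2 / (d : ℝ) * (1 + t ^ d) * (t ^ 2 / (1 - t ^ 2)) + log (1 - t ^ 2) := by
  unfold sphericalCriticalFun
  field_simp
  ring

theorem strictMonoOn_sphericalCriticalFun (d : ℕ) :
    StrictMonoOn (sphericalCriticalFun d) (Ioo 0 1) := by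
  have hsq : StrictMonoOn (fun t : ℝ => (1 - t ^ 2) * log (1 - t ^ 2) / t ^ 2) (Ioo 0 1) :=
    strictMonoOn_one_sub_mul_log_one_sub_div.comp
      ((pow_left_strictMonoOn₀ two_ne_zero).mono fun t ht => le_of_lt ht.1)
      fun t ⟨ht0, ht1⟩ => ⟨by positivity, by nlinarith⟩
  refine hsq.add_monotone fun s hs t _ hst => ?_
  have := hs.1.le
  gcongr

theorem continuousOn_sphericalCriticalFun (d : ℕ) :
    ContinuousOn (sphericalCriticalFun d) (Ioo 0 1) := by
  unfold sphericalCriticalFun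
  have hsub : ∀ t ∈ Ioo (0 : ℝ) 1, 1 - t ^ 2 ≠ 0 := fun t ⟨_, h1⟩ => by nlinarith
  have hsq : ∀ t ∈ Ioo (0 : ℝ) 1, t ^ 2 ≠ 0 := fun t ⟨h0, _⟩ => by positivity
  fun_prop (disch := assumption)

theorem sphericalCriticalFun_half_neg {d : ℕ} (hd : 3 ≤ d) :
    sphericalCriticalFun d (1 / 2) < 0 := by
  have hlog : log (3 / 4) < 3 / 4 - 1 := log_lt_sub_one_of_pos (by norm_num) (by norm_num)
  have hpow : (1 / 2 : ℝ) ^ d ≤ (1 / 2) ^ 3 :=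
    pow_le_pow_of_le_one (by norm_num) (by norm_num) hd
  have hd' : (3 : ℝ) ≤ d := by exact_mod_cast hd
  have hpoly : 2 / (d : ℝ) * (1 + (1 / 2) ^ d) ≤ 2 / 3 * (1 + (1 / 2) ^ 3) := by gcongr
  unfold sphericalCriticalFun
  norm_num at hpoly ⊢
  linarith

theorem sphericalCriticalFun_sqrt_one_sub_exp_pos {d : ℕ} (hd : d ≠ 0) :
    0 < sphericalCriticalFun d √(1 - exp (-d)) := by
  have hd' : (0 : ℝ) < d := by positivity
  have hexp : exp (-d : ℝ) < 1 := exp_lt_one_iff.mpr (by linarith)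
  have hsq : √(1 - exp (-d)) ^ 2 = 1 - exp (-d) := sq_sqrt (by linarith)
  have hlog_term := div_exp_sub_one_lt_two_div hd'
  have hpow_term : 0 ≤ 2 / (d : ℝ) * √(1 - exp (-d)) ^ d := by positivity
  unfold sphericalCriticalFun
  rw [hsq, one_sub_mul_log_one_sub_div_one_sub_exp_neg, mul_one_add]
  linarith

/-- **Uniqueness of the critical point for the spherical threshold.** For every integer
`d ≥ 3`, the equation `(2/d)(1+t^d) t²/(1-t²) + log(1-t²) = 0` has exactly one solution
`t ∈ (0,1)`. -/
theorem spherical_critical_point_unique (d : ℕ) (hd : 3 ≤ d) :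
    ∃! t : ℝ, t ∈ Set.Ioo (0:ℝ) 1 ∧
      2 / (d:ℝ) * (1 + t^d) * (t^2 / (1 - t^2)) + Real.log (1 - t^2) = 0 := by
  have hd0 : (0 : ℝ) < d := by positivity
  have hroot := isPreconnected_Ioo.existsUnique_eq_of_injOn
    (strictMonoOn_sphericalCriticalFun d).injOn (continuousOn_sphericalCriticalFun d)
    (by norm_num : (1 / 2 : ℝ) ∈ Ioo 0 1) (sqrt_one_sub_exp_neg_mem_Ioo hd0)
    ⟨(sphericalCriticalFun_half_neg hd).le,
      (sphericalCriticalFun_sqrt_one_sub_exp_pos (by omega)).le⟩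
  refine (existsUnique_congr fun t => and_congr_right fun ⟨ht0, ht1⟩ => ?_).mp hroot
  have hsq : 0 < 1 - t ^ 2 := by nlinarith
  rw [← sphericalCriticalFun_mul_sq_div d ht0.ne' hsq.ne', mul_eq_zero,
    or_iff_left (div_pos (by positivity) hsq).ne']
end
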